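/- The last digit of the final word of each sublist L_n^i belongs to {2, 3}. -/

import Mathlib

def lastD (w : List Nat) : Nat := w.getLastD 0

/-- Shifted production for the Catalan rule:
`sC k 2 = [2, k+1, k, ..., 3]` and, for `3 ≤ i ≤ k+1`,
`sC k i = [i, i+1, ..., k+1, 2, 3, ..., i-1]`. -/
def sC (k i : Nat) : List Nat :=
  if i = 2 then 2 :: (List.range (k - 1)).map (fun t => k + 1 - t)
  else (List.range (k + 2 - i)).map (fun t => i + t) ++
       (List.range (i - 2)).map (fun t => 2 + t)

/-- Builds the sublists `L_n^i` from the previous level, carrying the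
starting digit of the next shifted production. -/
def graySubsAux : Nat → List (List Nat) → List (List (List Nat))
  | _, [] => []
  | j, w :: ws =>
    let sub := (sC (lastD w) j).map (fun d => w ++ [d])
    sub :: graySubsAux (lastD (sub.getLastD [])) ws

def graySubs (prev : List (List Nat)) : List (List (List Nat)) :=
  graySubsAux 2 prev

/-- The Gray code list `L_n` for the Catalan succession rule. -/
def grayL : Nat → List (List Nat)
  | 0 => []
  | 1 => [[2]]
  | n + 2 => (graySubs (grayL (n + 1))).flatten

/-!
Every production used in the construction starts with 2 or 3, and whichever
production starts with 2 or 3 also ends with 2 or 3: `s(k,2)` ends in 3 (in 2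
when `k ≤ 1`) and `s(k,3)` ends in 2. Since the last digit of one sublist is the
starting digit of the next, induction along the sublists gives the claim, for
any previous level.
-/

lemma lastD_getLastD_map_append {l : List ℕ} (hl : l ≠ []) (w : List ℕ) :
    lastD ((l.map (fun d => w ++ [d])).getLastD []) = l.getLastD 0 := by
  obtain ⟨x, t, rfl⟩ := List.exists_cons_of_ne_nil hl
  rw [List.map_cons, List.getLastD_cons, List.getLastD_map, List.getLastD_cons]
  exact List.getLastD_concat

lemma sC_two_getLastD (k : ℕ) : (sC k 2).getLastD 0 = if k ≤ 1 then 2 else 3 := by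
  simp only [sC, if_true, List.getLastD_cons]
  split_ifs with hk
  · rw [Nat.sub_eq_zero_of_le hk]; rfl
  · obtain ⟨m, rfl⟩ : ∃ m, k = m + 2 := ⟨k - 2, by omega⟩
    rw [show m + 2 - 1 = m + 1 by omega, List.range_succ, List.map_append, List.map_singleton,
      List.getLastD_concat]
    omega

lemma sC_three_getLastD (k : ℕ) : (sC k 3).getLastD 0 = 2 := by
  simp [sC]

lemma lastD_getLastD_sC_map (k : ℕ) {j : ℕ} (hj : j = 2 ∨ j = 3) (w : List ℕ) :
    lastD (((sC k j).map (fun d => w ++ [d])).getLastD []) = 2 ∨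
      lastD (((sC k j).map (fun d => w ++ [d])).getLastD []) = 3 := by
  have hne : sC k j ≠ [] := by rcases hj with rfl | rfl <;> simp [sC]
  rw [lastD_getLastD_map_append hne]
  rcases hj with rfl | rfl
  · rw [sC_two_getLastD]; split_ifs <;> simp
  · exact Or.inl (sC_three_getLastD k)

lemma lastD_getLastD_of_mem_graySubsAux {j : ℕ} (hj : j = 2 ∨ j = 3) {ws : List (List ℕ)}
    {sub : List (List ℕ)} (hsub : sub ∈ graySubsAux j ws) :
    lastD (sub.getLastD []) = 2 ∨ lastD (sub.getLastD []) = 3 := by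
  induction ws generalizing j with
  | nil => simp [graySubsAux] at hsub
  | cons w ws ih =>
    rw [graySubsAux, List.mem_cons] at hsub
    rcases hsub with rfl | hsub
    · exact lastD_getLastD_sC_map _ hj w
    · exact ih (lastD_getLastD_sC_map _ hj w) hsub

theorem stmt8_general (n : Nat) (sub : List (List Nat))
    (hsub : sub ∈ graySubs (grayL n)) :
    lastD (sub.getLastD []) = 2 ∨ lastD (sub.getLastD []) = 3 :=
  lastD_getLastD_of_mem_graySubsAux (Or.inl rfl) hsub

/-- The last digit of the final word of each sublist `L_{n+1}^i` is 2 or 3. -/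
theorem stmt8 (n : Nat) (hn : 1 ≤ n) (sub : List (List Nat))
    (hsub : sub ∈ graySubs (grayL n)) :
    lastD (sub.getLastD []) = 2 ∨ lastD (sub.getLastD []) = 3 :=
  stmt8_general n sub hsub
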